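/- arXiv:1412.1645 — 3 statements merged into one kernel-verified Lean document; each statement's English description precedes it below -/
import Mathlib

section
/- For every m ∈ ℕ, the truncation map ρ_m : 𝓗 → 𝓗_m, (φ_k)_{k≥0} ↦ (φ_k)_{k=0}^{m}, is surjective. -/
/-!
Write `f = ψ₁`. For `k ≥ 1` the right-hand side `g_k(x) = ∏_{j=1}^k f^{(j)}(x^{s(k,j)})` of (H.k)
is a homomorphism 𝕋 → 𝕋. The `k!`-torsion of 𝕋 is cyclic, so `f` acts on it as `x ↦ x^a` for an
integer `a`, and there `g_k(x) = x^{Σ_j s(k,j) a^j} = x^{k!·C(a,k)} = 1`. As `x ↦ x^{k!}` is onto,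
`g_k` factors through it as a homomorphism `φ_k` with `φ_k(x^{k!}) = g_k(x)` for every `x ∈ 𝕋`.
Keeping `ψ` in degrees `≤ m` and taking these `φ_k` above gives an element of 𝓗.
-/

noncomputable section

/-- The circle group 𝕋. -/
abbrev 𝕋 := Circle

/-- Generalised binomial coefficient `C(n,k)` for integer `n`. -/
def gchoose (n : ℤ) (k : ℕ) : ℤ := Ring.choose n k

/-- Signed Stirling numbers of the first kind, `s(k,j)`, determined by
`k! · C(n,k) = Σ_{j=0}^k s(k,j) n^j`. -/
def stir : ℕ → ℕ → ℤ
  | 0, 0 => 1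
  | 0, _ + 1 => 0
  | _ + 1, 0 => 0
  | k + 1, j + 1 => stir k j - (k : ℤ) * stir k (j + 1)

/-- `H(𝕋)`: the set of (not necessarily continuous) group homomorphisms 𝕋 → 𝕋,
as a subset of the product space `𝕋 → 𝕋` (pointwise convergence topology). -/
def HSet : Set (𝕋 → 𝕋) := {f | ∀ x y : 𝕋, f (x * y) = f x * f y}

/-- `𝕋_Q`: the torsion subgroup of 𝕋. -/
def TQ : Set 𝕋 := {x | ∃ n : ℕ, 0 < n ∧ x ^ n = 1}

/-- The space 𝓗 ⊆ H(𝕋)^{ℤ≥0}: sequences satisfying (H.0) and (H.∞). -/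
def Hcal : Set (ℕ → 𝕋 → 𝕋) :=
  {φ | (∀ k, φ k ∈ HSet) ∧ φ 0 = (fun x => x) ∧
    ∀ k, 1 ≤ k → ∀ x ∈ TQ,
      φ k (x ^ Nat.factorial k) = ∏ j ∈ Finset.Icc 1 k, (φ 1)^[j] (x ^ stir k j)}

/-- The element `ñ` (whose `k`-th entry is `C(n,k)^×`), for `n : ℤ`. -/
def ntil (n : ℤ) : ℕ → 𝕋 → 𝕋 := fun k x => x ^ gchoose n k

/-- The homeomorphism `T` of `H(𝕋)^{ℤ≥0}`: `T(φ) = (φ_0, φ_0φ_1, φ_1φ_2, …)`. -/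
def Tmap (φ : ℕ → 𝕋 → 𝕋) : ℕ → 𝕋 → 𝕋 :=
  fun k => match k with
  | 0 => φ 0
  | k + 1 => fun x => φ k x * φ (k + 1) x

/-- The group operation ⋆ on 𝓗: `(φ ⋆ ψ)_k = ∏_{j=0}^k φ_{k-j} ∘ ψ_j`. -/
def hmul (φ ψ : ℕ → 𝕋 → 𝕋) : ℕ → 𝕋 → 𝕋 :=
  fun k x => ∏ j ∈ Finset.range (k + 1), φ (k - j) (ψ j x)

/-- The space `𝓗_m`, realised with index type `Fin (m+1)` (so `HFin N` has
indices `0, …, N-1`; `𝓗_m = HFin (m+1)`). -/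
def HFin (N : ℕ) : Set (Fin N → 𝕋 → 𝕋) :=
  {φ | (∀ k, φ k ∈ HSet) ∧ (∀ k : Fin N, (k : ℕ) = 0 → φ k = fun x => x) ∧
    ∀ k : Fin N, ∀ hk : 1 ≤ (k : ℕ), ∀ x ∈ TQ,
      φ k (x ^ Nat.factorial (k : ℕ)) =
        ∏ j ∈ Finset.Icc 1 (k : ℕ),
          (φ ⟨1, lt_of_le_of_lt hk k.isLt⟩)^[j] (x ^ stir (k : ℕ) j)}

open Finset Polynomial

instance Nat.factorial_neZero (n : ℕ) : NeZero n.factorial := ⟨n.factorial_ne_zero⟩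

theorem coeff_descPochhammer_int (k j : ℕ) : (descPochhammer ℤ k).coeff j = stir k j := by
  induction k generalizing j with
  | zero => cases j <;> simp [stir, coeff_one]
  | succ k ih =>
    cases j with
    | zero => simp [coeff_zero_eq_eval_zero, stir]
    | succ j =>
      rw [descPochhammer_succ_right, ← C_eq_natCast, coeff_mul_X_sub_C, ih, ih, stir]
      ring

theorem sum_stir_mul_pow (k : ℕ) (a : ℤ) :
    ∑ j ∈ range (k + 1), stir k j * a ^ j = k.factorial * Ring.choose a k := by
  rw [← nsmul_eq_mul, ← Ring.descPochhammer_eq_factorial_smul_choose, ← eval_eq_smeval,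
    eval_eq_sum_range, descPochhammer_natDegree]
  simp only [coeff_descPochhammer_int]

theorem sum_Icc_stir_mul_pow {k : ℕ} (hk : 1 ≤ k) (a : ℤ) :
    ∑ j ∈ Icc 1 k, stir k j * a ^ j = k.factorial * Ring.choose a k := by
  obtain ⟨k, rfl⟩ := Nat.exists_eq_add_of_le' hk
  rw [← sum_stir_mul_pow, sum_range_succ', ← Ico_add_one_right_eq_Icc, sum_Ico_eq_sum_range]
  simp [stir, add_comm 1]

theorem prod_zpow_eq_zpow_sum {G : Type*} [CommGroup G] (x : G) (s : Finset ℕ) (c : ℕ → ℤ) :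
    ∏ j ∈ s, x ^ c j = x ^ ∑ j ∈ s, c j := by
  induction s using Finset.cons_induction with
  | empty => simp
  | cons a s ha ih => rw [prod_cons, sum_cons, ih, zpow_add]

section CommGroup

variable {G : Type*} [CommGroup G]

theorem MonoidHom.exists_eq_zpow_of_pow_eq_one {N : ℕ} [NeZero N] [HasEnoughRootsOfUnity G N]
    (f : G →* G) : ∃ a : ℤ, ∀ x : G, x ^ N = 1 → f x = x ^ a := by
  obtain ⟨a, ha⟩ := (restrictRootsOfUnity f N).map_cyclic
  refine ⟨a, fun x hx => ?_⟩
  simpa [restrictRootsOfUnity_coe_apply] using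
    congrArg (fun u : rootsOfUnity N G => ((u : Gˣ) : G)) (ha (rootsOfUnity.mkOfPowEq x hx))

theorem iterate_eq_zpow_pow_of_pow_eq_one {f : G →* G} {N : ℕ} {a : ℤ}
    (ha : ∀ x : G, x ^ N = 1 → f x = x ^ a) (j : ℕ) {x : G} (hx : x ^ N = 1) :
    f^[j] x = x ^ a ^ j := by
  induction j generalizing x with
  | zero => simp
  | succ j ih =>
    have hxa : (x ^ a) ^ N = 1 := by
      rw [← zpow_natCast, ← zpow_mul, mul_comm, zpow_mul, zpow_natCast, hx, one_zpow]
    rw [Function.iterate_succ_apply, ha x hx, ih hxa, ← zpow_mul, pow_succ']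

def stirlingHom (f : G →* G) (k : ℕ) : G →* G where
  toFun x := ∏ j ∈ Icc 1 k, f^[j] (x ^ stir k j)
  map_one' := by simp [iterate_map_one]
  map_mul' x y := by simp only [mul_zpow, iterate_map_mul, prod_mul_distrib]

theorem stirlingHom_apply (f : G →* G) (k : ℕ) (x : G) :
    stirlingHom f k x = ∏ j ∈ Icc 1 k, f^[j] (x ^ stir k j) := rfl

theorem stirlingHom_eq_one_of_pow_factorial_eq_one {k : ℕ} [HasEnoughRootsOfUnity G k.factorial]
    (hk : 1 ≤ k) (f : G →* G) {x : G} (hx : x ^ k.factorial = 1) : stirlingHom f k x = 1 := by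
  obtain ⟨a, ha⟩ := f.exists_eq_zpow_of_pow_eq_one (N := k.factorial)
  have hpow : ∀ s : ℤ, (x ^ s) ^ k.factorial = 1 := fun s => by
    rw [← zpow_natCast, ← zpow_mul, mul_comm, zpow_mul, zpow_natCast, hx, one_zpow]
  calc stirlingHom f k x = ∏ j ∈ Icc 1 k, x ^ (stir k j * a ^ j) := by
        refine (stirlingHom_apply f k x).trans (prod_congr rfl fun j _ => ?_)
        rw [iterate_eq_zpow_pow_of_pow_eq_one ha j (hpow _), zpow_mul]
    _ = (x ^ k.factorial) ^ Ring.choose a k := by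
        rw [prod_zpow_eq_zpow_sum, sum_Icc_stir_mul_pow hk, zpow_mul, zpow_natCast]
    _ = 1 := by rw [hx, one_zpow]

theorem MonoidHom.exists_comp_pow_eq {H : Type*} [Group H] {n : ℕ}
    (hn : Function.Surjective fun x : G => x ^ n) (g : G →* H)
    (hg : ∀ x : G, x ^ n = 1 → g x = 1) : ∃ h : G →* H, ∀ x, h (x ^ n) = g x :=
  ⟨(powMonoidHom n).liftOfSurjective hn
      ⟨g, fun x hx => MonoidHom.mem_ker.2 (hg x (MonoidHom.mem_ker.1 hx))⟩,
    fun x => (powMonoidHom n).liftOfRightInverse_comp_apply _ _ _ x⟩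

end CommGroup

theorem Circle.pow_surjective {n : ℕ} (hn : n ≠ 0) :
    Function.Surjective fun x : Circle => x ^ n := by
  intro y
  refine ⟨Circle.exp (Complex.arg y / n), ?_⟩
  simp only [← Circle.exp_natCast_mul, mul_div_cancel₀ _ (Nat.cast_ne_zero.mpr hn : (n : ℝ) ≠ 0),
    Circle.exp_arg]

theorem exists_mem_HSet_pow_factorial {f : 𝕋 → 𝕋} (hf : f ∈ HSet) {k : ℕ} (hk : 1 ≤ k) :
    ∃ g ∈ HSet, ∀ x : 𝕋, g (x ^ k.factorial) = ∏ j ∈ Icc 1 k, f^[j] (x ^ stir k j) := by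
  obtain ⟨g, hg⟩ := (stirlingHom (MonoidHom.mk' f hf) k).exists_comp_pow_eq
    (Circle.pow_surjective k.factorial_ne_zero)
    (fun x hx => stirlingHom_eq_one_of_pow_factorial_eq_one hk _ hx)
  exact ⟨g, fun x y => map_mul g x y, hg⟩

/-- The truncation map `ρ_m : 𝓗 → 𝓗_m` is surjective: every element of `𝓗_m`
extends to an element of `𝓗`. -/
theorem stmt2 (m : ℕ) (hm : 1 ≤ m) (ψ : Fin (m + 1) → 𝕋 → 𝕋) (hψ : ψ ∈ HFin (m + 1)) :
    ∃ φ ∈ Hcal, ∀ k : Fin (m + 1), φ (k : ℕ) = ψ k := by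
  obtain ⟨hψ_hom, hψ_zero, hψ_stir⟩ := hψ
  have h1 : 1 < m + 1 := by omega
  choose! g hg_hom hg using fun k (hk : 1 ≤ k) => exists_mem_HSet_pow_factorial (hψ_hom ⟨1, h1⟩) hk
  let φ : ℕ → 𝕋 → 𝕋 := fun k => if h : k < m + 1 then ψ ⟨k, h⟩ else g k
  have hφ_lt : ∀ k (h : k < m + 1), φ k = ψ ⟨k, h⟩ := fun k h => dif_pos h
  have hφ_ge : ∀ k, ¬k < m + 1 → φ k = g k := fun k h => dif_neg h
  refine ⟨φ, ⟨fun k => ?_, ?_, fun k hk x hx => ?_⟩, fun k => hφ_lt k k.isLt⟩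
  · by_cases h : k < m + 1
    · rw [hφ_lt k h]; exact hψ_hom _
    · rw [hφ_ge k h]; exact hg_hom k (by omega)
  · rw [hφ_lt 0 (by omega)]
    exact hψ_zero ⟨0, by omega⟩ rfl
  · rw [hφ_lt 1 h1]
    by_cases h : k < m + 1
    · rw [hφ_lt k h]; exact hψ_stir ⟨k, h⟩ hk x hx
    · rw [hφ_ge k h]; exact hg k hk x
end
end

section
/- Let φ, ψ ∈ 𝓗 and suppose that for some k ≥ 0 we have φ_j = 0̃_j for all 0 ≤ j ≤ k (i.e. φ_0 = 1^× and φ_j = 0^× for 1 ≤ j ≤ k). Then the commutator χ = φ^{−1} ⋆ ψ^{−1} ⋆ φ ⋆ ψ (inverses taken in the group (𝓗, ⋆)) satisfies χ_j = 0^× for all 1 ≤ j ≤ k+1, and χ_{k+2} = (conjugate of ψ_1 ∘ φ_{k+1}) · (φ_{k+1} ∘ ψ_1), i.e. χ_{k+2}(x) = \overline{ψ_1(φ_{k+1}(x))}·φ_{k+1}(ψ_1(x)) for all x ∈ 𝕋. -/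
noncomputable section

/-!
Say that `φ` is trivial up to `k` when `φ_j = 0̃_j` for `j ≤ k`. If one factor of `f ⋆ g` is
trivial up to `k`, then in degrees `≤ k + 2` all but at most one cross term of `(f ⋆ g)_n`
vanish. Applied to `φ⁻¹ ⋆ φ = 0̃`, this shows that `φ⁻¹` is trivial up to `k` with
`φ⁻¹_{k+1} = φ_{k+1}⁻¹`; applied twice more, that the conjugate `φ⁻¹ ⋆ ψ⁻¹ ⋆ φ` agrees with
`ψ⁻¹` up to degree `k + 1` and in degree `k + 2` differs from it only by the cross terms
`φ⁻¹_{k+1} ∘ ψ⁻¹_1` and `ψ⁻¹_1 ∘ φ_{k+1}`. Multiplying by `ψ` on the right cancels everything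
else, and `ψ⁻¹_1 = ψ_1⁻¹` gives the formula.
-/

open Finset

lemma HSet.map_one {f : 𝕋 → 𝕋} (hf : f ∈ HSet) : f 1 = 1 :=
  (MonoidHom.mk' f hf).map_one

lemma HSet.map_inv {f : 𝕋 → 𝕋} (hf : f ∈ HSet) (x : 𝕋) : f x⁻¹ = (f x)⁻¹ :=
  _root_.map_inv (MonoidHom.mk' f hf) x

lemma Hcal.apply_one {φ : ℕ → 𝕋 → 𝕋} (hφ : φ ∈ Hcal) (m : ℕ) : φ m 1 = 1 :=
  HSet.map_one (hφ.1 m)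

lemma ntil_zero_zero_apply (x : 𝕋) : ntil 0 0 x = x := by
  simp [ntil, gchoose]

lemma ntil_zero_apply_of_pos {j : ℕ} (hj : 0 < j) (x : 𝕋) : ntil 0 j x = 1 := by
  rw [ntil, gchoose, Ring.choose_zero_pos ℤ hj, zpow_zero]

lemma Finset.prod_range_succ_eq_of_eq_one {M : Type*} [CommMonoid M] (u : ℕ → M) {n k : ℕ}
    (h : ∀ j, n - k ≤ j → j < n → u j = 1) :
    ∏ j ∈ range (n + 1), u j = (∏ j ∈ range (n - k), u j) * u n := by
  rw [prod_range_succ, ← prod_range_mul_prod_Ico u (Nat.sub_le n k),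
    prod_eq_one fun j hj => h j (mem_Ico.1 hj).1 (mem_Ico.1 hj).2, mul_one]

section hmul

variable {f f' g : ℕ → 𝕋 → 𝕋} {k n : ℕ}

lemma hmul_apply_one (hf : ∀ m, f m 1 = 1) (hg : ∀ m, g m 1 = 1) (n : ℕ) :
    hmul f g n 1 = 1 :=
  prod_eq_one fun j _ => by rw [hg, hf]

lemma hmul_one_apply (hf : f 0 = fun x => x) (hg : g 0 = fun x => x) (x : 𝕋) :
    hmul f g 1 x = f 1 x * g 1 x := by
  simp [hmul, prod_range_succ, hf, hg]

lemma hmul_congr_left (h : ∀ j ≤ n, f j = f' j) : hmul f g n = hmul f' g n := by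
  funext x
  exact prod_congr rfl fun j _ => by rw [h (n - j) (Nat.sub_le n j)]

lemma hmul_succ_apply_mul_of_eq_of_le (h : ∀ j ≤ n, f j = f' j) (x : 𝕋) :
    hmul f g (n + 1) x * f' (n + 1) (g 0 x) = f (n + 1) (g 0 x) * hmul f' g (n + 1) x := by
  simp only [hmul, prod_range_succ' _ (n + 1), Nat.sub_zero]
  rw [prod_congr rfl fun j (hj : j ∈ range (n + 1)) => by
    rw [h (n + 1 - (j + 1)) (by omega)]]
  ac_rfl

lemma hmul_apply_of_trivial_left (hf : ∀ j ≤ k, f j = ntil 0 j) (n : ℕ) (x : 𝕋) :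
    hmul f g n x = (∏ j ∈ range (n - k), f (n - j) (g j x)) * g n x := by
  rw [hmul, prod_range_succ_eq_of_eq_one (k := k) _ fun j h₁ h₂ => by
    rw [hf (n - j) (by omega), ntil_zero_apply_of_pos (by omega)]]
  rw [Nat.sub_self, hf 0 (Nat.zero_le k), ntil_zero_zero_apply]

lemma hmul_apply_of_trivial_right (hg : ∀ j ≤ k, g j = ntil 0 j) (hf : ∀ m, f m 1 = 1)
    (n : ℕ) (x : 𝕋) :
    hmul f g n x = (∏ j ∈ range (n - k), f j (g (n - j) x)) * f n (g 0 x) := by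
  rw [hmul, ← prod_range_reflect, prod_range_succ_eq_of_eq_one (k := k) _ fun j h₁ h₂ => by
    rw [Nat.add_sub_cancel, Nat.sub_sub_self (by omega), hg (n - j) (by omega),
      ntil_zero_apply_of_pos (by omega), hf]]
  simp only [Nat.add_sub_cancel, Nat.sub_self]
  refine congrArg (· * _) (prod_congr rfl fun j hj => ?_)
  rw [Nat.sub_sub_self (by simp at hj; omega)]

section trivialLeft

variable (hf : ∀ j ≤ k, f j = ntil 0 j) (hg : g 0 = fun x => x)
include hf

lemma hmul_eq_of_trivial_left_of_le (hn : n ≤ k) : hmul f g n = g n := by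
  funext x
  simp [hmul_apply_of_trivial_left hf, Nat.sub_eq_zero_of_le hn]

include hg

lemma hmul_succ_apply_of_trivial_left (x : 𝕋) :
    hmul f g (k + 1) x = f (k + 1) x * g (k + 1) x := by
  simp [hmul_apply_of_trivial_left hf, hg]

lemma hmul_add_two_apply_of_trivial_left (x : 𝕋) :
    hmul f g (k + 2) x = f (k + 2) x * f (k + 1) (g 1 x) * g (k + 2) x := by
  simp [hmul_apply_of_trivial_left hf, prod_range_succ, hg]

end trivialLeft

section trivialRight

variable (hg : ∀ j ≤ k, g j = ntil 0 j) (hf1 : ∀ m, f m 1 = 1) (hf0 : f 0 = fun x => x)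
include hg hf1

lemma hmul_eq_of_trivial_right_of_le (hn : n ≤ k) : hmul f g n = f n := by
  funext x
  simp [hmul_apply_of_trivial_right hg hf1, Nat.sub_eq_zero_of_le hn, hg 0 (Nat.zero_le k),
    ntil_zero_zero_apply]

include hf0

lemma hmul_succ_apply_of_trivial_right (x : 𝕋) :
    hmul f g (k + 1) x = f (k + 1) x * g (k + 1) x := by
  simp [hmul_apply_of_trivial_right hg hf1, hf0, hg 0 (Nat.zero_le k), ntil_zero_zero_apply,
    mul_comm]

lemma hmul_add_two_apply_of_trivial_right (x : 𝕋) :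
    hmul f g (k + 2) x = f (k + 2) x * f 1 (g (k + 1) x) * g (k + 2) x := by
  simp only [hmul_apply_of_trivial_right hg hf1, add_tsub_cancel_left, prod_range_succ,
    range_one, prod_singleton, tsub_zero, hf0, Nat.add_one_sub_one, hg 0 (Nat.zero_le k),
    ntil_zero_zero_apply]
  ac_rfl

end trivialRight

end hmul

section leftInv

variable {φ φi : ℕ → 𝕋 → 𝕋} {k : ℕ} (hφ : ∀ j ≤ k, φ j = ntil 0 j)
  (hφi1 : ∀ m, φi m 1 = 1) (hinv : hmul φi φ = ntil 0)
include hφ hφi1 hinv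

lemma leftInv_eq_ntil_zero_of_le {j : ℕ} (hj : j ≤ k) : φi j = ntil 0 j := by
  rw [← hinv, hmul_eq_of_trivial_right_of_le hφ hφi1 hj]

variable (hφi0 : φi 0 = fun x => x)
include hφi0

lemma leftInv_succ_apply (x : 𝕋) : φi (k + 1) x = (φ (k + 1) x)⁻¹ := by
  refine eq_inv_of_mul_eq_one_left ?_
  rw [← hmul_succ_apply_of_trivial_right hφ hφi1 hφi0, hinv, ntil_zero_apply_of_pos k.succ_pos]

lemma leftInv_add_two_apply_mul (x : 𝕋) :
    φi (k + 2) x * φi 1 (φ (k + 1) x) * φ (k + 2) x = 1 := by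
  rw [← hmul_add_two_apply_of_trivial_right hφ hφi1 hφi0, hinv,
    ntil_zero_apply_of_pos (by omega)]

end leftInv

section conj

variable {φ φi ψi : ℕ → 𝕋 → 𝕋} {k : ℕ} (hφ : ∀ j ≤ k, φ j = ntil 0 j)
  (hφi1 : ∀ m, φi m 1 = 1) (hinv : hmul φi φ = ntil 0) (hφi0 : φi 0 = fun x => x)
  (hψi1 : ∀ m, ψi m 1 = 1) (hψi0 : ψi 0 = fun x => x)
include hφ hφi1 hinv hφi0 hψi1 hψi0

lemma conj_eq_of_le {n : ℕ} (hn : n ≤ k + 1) : hmul (hmul φi ψi) φ n = ψi n := by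
  have hφi : ∀ j ≤ k, φi j = ntil 0 j := fun j => leftInv_eq_ntil_zero_of_le hφ hφi1 hinv
  have hφiψi1 : ∀ m, hmul φi ψi m 1 = 1 := hmul_apply_one hφi1 hψi1
  rcases Nat.lt_or_eq_of_le hn with hn | rfl
  · rw [hmul_eq_of_trivial_right_of_le hφ hφiψi1 (by omega),
      hmul_eq_of_trivial_left_of_le hφi (by omega)]
  · have hφiψi0 : hmul φi ψi 0 = fun x => x := by
      rw [hmul_eq_of_trivial_left_of_le hφi k.zero_le, hψi0]
    funext x
    rw [hmul_succ_apply_of_trivial_right hφ hφiψi1 hφiψi0, hmul_succ_apply_of_trivial_left hφi hψi0,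
      leftInv_succ_apply hφ hφi1 hinv hφi0, mul_right_comm, inv_mul_cancel, one_mul]

lemma conj_add_two_apply (x : 𝕋) :
    hmul (hmul φi ψi) φ (k + 2) x =
      φi (k + 1) (ψi 1 x) * ψi (k + 2) x * ψi 1 (φ (k + 1) x) := by
  have hφi : ∀ j ≤ k, φi j = ntil 0 j := fun j => leftInv_eq_ntil_zero_of_le hφ hφi1 hinv
  have hφiψi0 : hmul φi ψi 0 = fun x => x := by
    rw [hmul_eq_of_trivial_left_of_le hφi k.zero_le, hψi0]
  have h := leftInv_add_two_apply_mul hφ hφi1 hinv hφi0 x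
  rw [hmul_add_two_apply_of_trivial_right hφ (hmul_apply_one hφi1 hψi1) hφiψi0,
    hmul_add_two_apply_of_trivial_left hφi hψi0, hmul_one_apply hφi0 hψi0]
  grind

end conj

/-- Commutator computation in `(𝓗, ⋆)`: if `φ_j = 0̃_j` for `0 ≤ j ≤ k`, then the
commutator `χ = φ⁻¹ ⋆ ψ⁻¹ ⋆ φ ⋆ ψ` satisfies `χ_j = 0^×` for `1 ≤ j ≤ k+1` and
`χ_{k+2}(x) = (ψ_1(φ_{k+1}(x)))⁻¹ · φ_{k+1}(ψ_1(x))` (conjugation on 𝕋 being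
inversion). Inverses are specified via two-sided inverse elements of `(𝓗, ⋆)`,
whose identity element is `0̃ = ntil 0`. -/
theorem stmt9 (φ ψ φi ψi : ℕ → 𝕋 → 𝕋)
    (hφ : φ ∈ Hcal) (hψ : ψ ∈ Hcal) (hφi : φi ∈ Hcal) (hψi : ψi ∈ Hcal)
    (hφinv : hmul φi φ = ntil 0 ∧ hmul φ φi = ntil 0)
    (hψinv : hmul ψi ψ = ntil 0 ∧ hmul ψ ψi = ntil 0)
    (k : ℕ) (hk : ∀ j ≤ k, φ j = ntil 0 j) :
    (∀ j, 1 ≤ j → j ≤ k + 1 → hmul (hmul (hmul φi ψi) φ) ψ j = fun x : 𝕋 => x ^ (0 : ℤ)) ∧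
    (hmul (hmul (hmul φi ψi) φ) ψ (k + 2) =
      fun x : 𝕋 => (ψ 1 (φ (k + 1) x))⁻¹ * φ (k + 1) (ψ 1 x)) := by
  have hconj : ∀ n ≤ k + 1, hmul (hmul φi ψi) φ n = ψi n := fun n =>
    conj_eq_of_le hk (Hcal.apply_one hφi) hφinv.1 hφi.2.1 (Hcal.apply_one hψi) hψi.2.1
  have hψi_one (y : 𝕋) : ψi 1 y = (ψ 1 y)⁻¹ := by
    refine eq_inv_of_mul_eq_one_left ?_
    rw [← hmul_one_apply hψi.2.1 hψ.2.1, hψinv.1, ntil_zero_apply_of_pos one_pos]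
  refine ⟨fun j hj₁ hj₂ => ?_, ?_⟩
  · funext x
    rw [hmul_congr_left fun i hi => hconj i (hi.trans hj₂), hψinv.1,
      ntil_zero_apply_of_pos hj₁, zpow_zero]
  · funext x
    have h := hmul_succ_apply_mul_of_eq_of_le (g := ψ) hconj x
    rw [hψinv.1, ntil_zero_apply_of_pos (by omega), hψ.2.1,
      conj_add_two_apply hk (Hcal.apply_one hφi) hφinv.1 hφi.2.1 (Hcal.apply_one hψi) hψi.2.1,
      leftInv_succ_apply hk (Hcal.apply_one hφi) hφinv.1 hφi.2.1, hψi_one, hψi_one,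
      HSet.map_inv (hφ.1 (k + 1)), inv_inv, mul_one] at h
    exact mul_right_cancel (h.trans (by ac_rfl))
end
end

section
/- For the dynamical system (𝓗, T) and the point 0̃ ∈ 𝓗, one has ω_{0̃} C(𝓗) = 𝒲; that is, the algebra {(f(T^n 0̃))_{n∈ℤ} : f ∈ C(𝓗)} ⊆ ℓ^∞(ℤ) equals the Weyl algebra 𝒲. -/
/-!
The evaluations `φ ↦ φ_k(x)` are continuous on 𝓗 and separate its points, and along the orbit
`T^n 0̃ = ñ` the evaluation at `(k, e^{2πit})` is the sequence `n ↦ e^{2πi t C(n,k)}`, an element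
of 𝒫. As `ω_{0̃}` is a continuous *-homomorphism and 𝒲 a closed *-subalgebra, Stone–Weierstrass
gives `ω_{0̃} C(𝓗) ⊆ 𝒲`. Conversely, every real polynomial is a real combination of the binomial
polynomials `C(·,k)`, so products of evaluations realise all of 𝒫; and the range of `ω_{0̃}` is
closed: by Tietze it is the range of the pullback from the orbit closure, an injective, hence
isometric, *-homomorphism of C*-algebras.
-/

noncomputable section

/-- The quasi-eigenfunction groups `G_m(X,u)` inside `C(X, ℂ)` (unimodular
continuous functions): `G_0` = unimodular constants,
`G_{m+1} = {g unimodular : g ∘ u = f · g for some f ∈ G_m}`. -/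
def QEm {X : Type*} [TopologicalSpace X] (u : X → X) : ℕ → Set C(X, ℂ)
  | 0 => {g | (∀ x, ‖g x‖ = 1) ∧ ∃ c : ℂ, ∀ x, g x = c}
  | m + 1 => {g | (∀ x, ‖g x‖ = 1) ∧ ∃ f ∈ QEm u m, ∀ x, g (u x) = f x * g x}

/-- `(X,u)` has (topological) quasi-discrete spectrum: the linear span of the
quasi-eigenfunctions `G(X,u) = ⋃_m G_m(X,u)` is dense in `C(X, ℂ)`. -/
def HasQDS {X : Type*} [TopologicalSpace X] (u : X → X) : Prop :=
  Dense (↑(Submodule.span ℂ (⋃ m, QEm u m)) : Set C(X, ℂ))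

/-- The map `ω_x : C(X) → ℓ^∞(ℤ)`, `ω_x(f)(n) = f(s^n x)`. -/
def omegaSeq {X : Type*} [TopologicalSpace X] [CompactSpace X]
    (s : Equiv.Perm X) (x : X) (f : C(X, ℂ)) : BoundedContinuousFunction ℤ ℂ :=
  (BoundedContinuousFunction.mkOfCompact f).compContinuous
    ⟨fun n : ℤ => (s ^ n) x, continuous_of_discreteTopology⟩

/-- `𝒫_m ⊆ ℓ^∞(ℤ)`: sequences `n ↦ e^{2πi p(n)}`, `p` a real polynomial of
degree at most `m`. -/
def Pdeg (m : ℕ) : Set (BoundedContinuousFunction ℤ ℂ) :=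
  {F | ∃ p : Polynomial ℝ, p.natDegree ≤ m ∧
    ∀ n : ℤ, F n = Complex.exp (2 * Real.pi * Complex.I * ((p.eval (n : ℝ) : ℝ) : ℂ))}

/-- `𝒫 = ⋃_m 𝒫_m`: all sequences of polynomial type. -/
def Pall : Set (BoundedContinuousFunction ℤ ℂ) := ⋃ m, Pdeg m

/-- The Weyl algebra `𝒲`: the closed linear span of `𝒫` in `ℓ^∞(ℤ)`. -/
def Wset : Set (BoundedContinuousFunction ℤ ℂ) :=
  closure (↑(Submodule.span ℂ Pall) : Set (BoundedContinuousFunction ℤ ℂ))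


open BoundedContinuousFunction

section BoundedPullback

variable {D X : Type*} [TopologicalSpace D] [TopologicalSpace X] [CompactSpace X]

def boundedPullback (g : C(D, X)) : C(X, ℂ) →⋆ₐ[ℂ] (D →ᵇ ℂ) where
  toFun f := (mkOfCompact f).compContinuous g
  map_one' := rfl
  map_mul' _ _ := rfl
  map_zero' := rfl
  map_add' _ _ := rfl
  commutes' _ := rfl
  map_star' _ := rfl

lemma continuous_boundedPullback (g : C(D, X)) : Continuous (boundedPullback g) :=
  (continuous_compContinuous g).comp (ContinuousMap.isometryEquivBoundedOfCompact X ℂ).continuous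

lemma isometry_boundedPullback (g : C(D, X)) (hg : DenseRange g) :
    Isometry (boundedPullback g) :=
  NonUnitalStarAlgHom.isometry (boundedPullback g) fun f₁ f₂ h =>
    ContinuousMap.ext fun x => congrFun
      (hg.equalizer f₁.continuous f₂.continuous (funext fun d => DFunLike.congr_fun h d)) x

lemma isClosed_range_boundedPullback [T2Space X] (g : C(D, X)) :
    IsClosed (Set.range (boundedPullback g)) := by
  set Y := closure (Set.range g)
  have hY : IsClosed Y := isClosed_closure
  have : CompactSpace Y := isCompact_iff_compactSpace.mp hY.isCompact
  let g' : C(D, Y) := ⟨fun d => ⟨g d, subset_closure ⟨d, rfl⟩⟩, by fun_prop⟩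
  have hg' : DenseRange g' := Subtype.dense_iff.mpr <| by
    rw [← Set.range_comp]
    exact subset_rfl
  have hrange : Set.range (boundedPullback g) = Set.range (boundedPullback g') := by
    ext F
    constructor
    · rintro ⟨f, rfl⟩
      exact ⟨f.restrict Y, rfl⟩
    · rintro ⟨f, rfl⟩
      obtain ⟨f', rfl⟩ := ContinuousMap.exists_restrict_eq hY f
      exact ⟨f', rfl⟩
  rw [hrange]
  exact (isometry_boundedPullback g' hg').isClosedEmbedding.isClosed_range

end BoundedPullback

section WeylAlgebra

open Polynomial Complex
open scoped Real

lemma mem_Pall_of_forall_eq {F : ℤ →ᵇ ℂ} (p : ℝ[X])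
    (hF : ∀ n : ℤ, F n = exp (2 * π * I * ((p.eval (n : ℝ) : ℝ) : ℂ))) : F ∈ Pall :=
  Set.mem_iUnion.mpr ⟨p.natDegree, p, le_rfl, hF⟩

lemma one_mem_Pall : (1 : ℤ →ᵇ ℂ) ∈ Pall :=
  mem_Pall_of_forall_eq 0 fun n => by simp

lemma mul_mem_Pall {F G : ℤ →ᵇ ℂ} (hF : F ∈ Pall) (hG : G ∈ Pall) : F * G ∈ Pall := by
  obtain ⟨_, ⟨-, rfl⟩, p, -, hFp⟩ := hF
  obtain ⟨_, ⟨-, rfl⟩, q, -, hGq⟩ := hG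
  refine mem_Pall_of_forall_eq (p + q) fun n => ?_
  rw [BoundedContinuousFunction.mul_apply, hFp, hGq, ← exp_add, eval_add]
  push_cast
  ring_nf

lemma star_mem_Pall {F : ℤ →ᵇ ℂ} (hF : F ∈ Pall) : star F ∈ Pall := by
  obtain ⟨_, ⟨-, rfl⟩, p, -, hFp⟩ := hF
  refine mem_Pall_of_forall_eq (-p) fun n => ?_
  rw [BoundedContinuousFunction.star_apply, hFp, RCLike.star_def, ← exp_conj, eval_neg]
  simp only [map_mul, conj_I, conj_ofReal, map_ofNat]
  push_cast
  ring_nf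

lemma mul_mem_span_Pall {F G : ℤ →ᵇ ℂ} (hF : F ∈ Submodule.span ℂ Pall)
    (hG : G ∈ Submodule.span ℂ Pall) : F * G ∈ Submodule.span ℂ Pall := by
  have hFG := Submodule.mul_mem_mul hF hG
  rw [Submodule.span_mul_span] at hFG
  exact Submodule.span_mono (Set.mul_subset_iff.mpr fun _ ha _ hb => mul_mem_Pall ha hb) hFG

lemma star_mem_span_Pall {F : ℤ →ᵇ ℂ} (hF : F ∈ Submodule.span ℂ Pall) :
    star F ∈ Submodule.span ℂ Pall := by
  induction hF using Submodule.span_induction with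
  | mem G hG => exact Submodule.subset_span (star_mem_Pall hG)
  | zero => simp
  | add G H _ _ hG hH => simpa only [star_add] using Submodule.add_mem _ hG hH
  | smul c G _ hG => simpa only [star_smul] using Submodule.smul_mem _ (star c) hG

def polyPhaseAlgebra : StarSubalgebra ℂ (ℤ →ᵇ ℂ) where
  toSubalgebra := (Submodule.span ℂ Pall).toSubalgebra (Submodule.subset_span one_mem_Pall)
    fun _ _ => mul_mem_span_Pall
  star_mem' := star_mem_span_Pall

lemma coe_topologicalClosure_polyPhaseAlgebra :
    (polyPhaseAlgebra.topologicalClosure : Set (ℤ →ᵇ ℂ)) = Wset := rfl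

end WeylAlgebra

section NtilOrbit

lemma Tmap_injective : Function.Injective Tmap := by
  intro φ ψ h
  funext k
  induction k with
  | zero => exact congrFun h 0
  | succ k ih =>
    funext x
    have hk := congrFun (congrFun h (k + 1)) x
    simp only [Tmap, ih] at hk
    exact mul_left_cancel hk

lemma Tmap_ntil (n : ℤ) : Tmap (ntil n) = ntil (n + 1) := by
  funext k x
  cases k with
  | zero => simp [Tmap, ntil, gchoose]
  | succ k => simp only [Tmap, ntil, gchoose, ← zpow_add, Ring.choose_succ_succ]

variable {S : Set (ℕ → 𝕋 → 𝕋)} (TH : Equiv.Perm S)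
  (hTH : ∀ φ : S, ((TH φ : S) : ℕ → 𝕋 → 𝕋) = Tmap φ) {z0 : S}
  (hz0 : (z0 : ℕ → 𝕋 → 𝕋) = ntil 0)
include hTH hz0

lemma coe_zpow_apply_eq_ntil (n : ℤ) : ((TH ^ n) z0 : ℕ → 𝕋 → 𝕋) = ntil n := by
  induction n using Int.induction_on with
  | zero => simpa using hz0
  | succ n ih => rw [add_comm, zpow_one_add, Equiv.Perm.mul_apply, hTH, ih, Tmap_ntil, add_comm]
  | pred n ih =>
    apply Tmap_injective
    rw [← hTH, ← Equiv.Perm.mul_apply, ← zpow_one_add, add_sub_cancel, ih, Tmap_ntil,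
      sub_add_cancel]

end NtilOrbit

section BinomialPolynomials

open Polynomial

lemma descPochhammer_eval_intCast (k : ℕ) (n : ℤ) :
    (descPochhammer ℝ k).eval (n : ℝ) = k.factorial * (gchoose n k : ℝ) := by
  rw [← descPochhammer_eval_cast, eval_eq_smeval, Ring.descPochhammer_eq_factorial_smul_choose,
    nsmul_eq_mul]
  push_cast
  rfl

def descPochhammerSequence : Polynomial.Sequence ℝ where
  elems' := descPochhammer ℝ
  degree_eq' k := by
    rw [degree_eq_natDegree (monic_descPochhammer ℝ k).ne_zero, descPochhammer_natDegree]

lemma span_range_descPochhammer : Submodule.span ℝ (Set.range (descPochhammer ℝ)) = ⊤ :=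
  descPochhammerSequence.span fun k => by
    simp [descPochhammerSequence, (monic_descPochhammer ℝ k).leadingCoeff]

end BinomialPolynomials

def coordFun {S : Set (ℕ → 𝕋 → 𝕋)} (k : ℕ) (x : 𝕋) : C(S, ℂ) :=
  ⟨fun φ => ((φ : ℕ → 𝕋 → 𝕋) k x : ℂ),
    continuous_induced_dom.comp <| (continuous_apply x).comp <|
      (continuous_apply k).comp continuous_subtype_val⟩

lemma exists_coordFun_ne {S : Set (ℕ → 𝕋 → 𝕋)} {φ ψ : S} (h : φ ≠ ψ) :
    ∃ k x, coordFun k x φ ≠ coordFun k x ψ := by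
  by_contra! hcoord
  exact h <| Subtype.ext <| funext fun k => funext fun x => Circle.coe_injective (hcoord k x)

def orbitMap {X : Type*} [TopologicalSpace X] (s : Equiv.Perm X) (x : X) : C(ℤ, X) :=
  ⟨fun n => (s ^ n) x, continuous_of_discreteTopology⟩

lemma omegaSeq_eq_boundedPullback {X : Type*} [TopologicalSpace X] [CompactSpace X]
    (s : Equiv.Perm X) (x : X) : omegaSeq s x = boundedPullback (orbitMap s x) :=
  rfl

section OmegaOfZero

open Polynomial
open scoped Real

variable {S : Set (ℕ → 𝕋 → 𝕋)} [CompactSpace S] (TH : Equiv.Perm S)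
  (hTH : ∀ φ : S, ((TH φ : S) : ℕ → 𝕋 → 𝕋) = Tmap φ) {z0 : S}
  (hz0 : (z0 : ℕ → 𝕋 → 𝕋) = ntil 0)
include hTH hz0

lemma omegaSeq_coordFun (k : ℕ) (x : 𝕋) (n : ℤ) :
    omegaSeq TH z0 (coordFun k x) n = (x : ℂ) ^ gchoose n k := by
  change (((TH ^ n) z0 : ℕ → 𝕋 → 𝕋) k x : ℂ) = _
  rw [coe_zpow_apply_eq_ntil TH hTH hz0]
  rfl

lemma omegaSeq_coordFun_circleExp (k : ℕ) (a : ℝ) (n : ℤ) :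
    omegaSeq TH z0 (coordFun k (Circle.exp (2 * π * (a * k.factorial)))) n =
      Complex.exp (2 * π * Complex.I * (((a • descPochhammer ℝ k).eval (n : ℝ) : ℝ) : ℂ)) := by
  rw [omegaSeq_coordFun TH hTH hz0, ← Circle.coe_zpow, ← Circle.exp_intCast_mul, Circle.coe_exp,
    eval_smul, smul_eq_mul, descPochhammer_eval_intCast]
  congr 1
  push_cast
  ring

lemma omegaSeq_coordFun_mem_Pall (k : ℕ) (x : 𝕋) : omegaSeq TH z0 (coordFun k x) ∈ Pall := by
  obtain ⟨t, rfl⟩ := Circle.exp_surjective x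
  have ht : t = 2 * π * (t / (2 * π * k.factorial) * k.factorial) := by field_simp
  rw [ht]
  exact mem_Pall_of_forall_eq _ (omegaSeq_coordFun_circleExp TH hTH hz0 k _)

lemma exists_omegaSeq_eq_exp_eval (p : ℝ[X]) : ∃ f : C(S, ℂ), ∀ n : ℤ,
    omegaSeq TH z0 f n = Complex.exp (2 * π * Complex.I * ((p.eval (n : ℝ) : ℝ) : ℂ)) := by
  -- The realisable polynomials only form an additive group, so induct on the statement for all
  -- real multiples at once.
  suffices h : ∀ a : ℝ, ∃ f : C(S, ℂ), ∀ n : ℤ, omegaSeq TH z0 f n =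
      Complex.exp (2 * π * Complex.I * (((a • p).eval (n : ℝ) : ℝ) : ℂ)) by
    simpa using h 1
  have hp : p ∈ Submodule.span ℝ (Set.range (descPochhammer ℝ)) := by
    simp [span_range_descPochhammer]
  induction hp using Submodule.span_induction with
  | mem _ hk =>
    obtain ⟨k, rfl⟩ := hk
    exact fun a => ⟨_, omegaSeq_coordFun_circleExp TH hTH hz0 k a⟩
  | zero => exact fun _ => ⟨1, fun n => by change (1 : ℂ) = _; simp⟩
  | add p q _ _ hp hq =>
    intro a
    obtain ⟨f, hf⟩ := hp a
    obtain ⟨g, hg⟩ := hq a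
    refine ⟨f * g, fun n => ?_⟩
    change omegaSeq TH z0 f n * omegaSeq TH z0 g n = _
    rw [hf, hg, ← Complex.exp_add, smul_add, eval_add]
    push_cast
    ring_nf
  | smul c p _ hp => exact fun a => by simpa only [smul_smul] using hp (a * c)

lemma range_omegaSeq_subset_Wset : Set.range (omegaSeq TH z0) ⊆ Wset := by
  rw [omegaSeq_eq_boundedPullback, ← coe_topologicalClosure_polyPhaseAlgebra]
  set A := polyPhaseAlgebra.topologicalClosure.comap (boundedPullback (orbitMap TH z0))
  have hA : IsClosed (A : Set C(S, ℂ)) :=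
    isClosed_closure.preimage (continuous_boundedPullback (orbitMap TH z0))
  have hcoord (k : ℕ) (x : 𝕋) : coordFun k x ∈ A :=
    subset_closure (Submodule.subset_span (omegaSeq_coordFun_mem_Pall TH hTH hz0 k x))
  have hsep : A.SeparatesPoints := fun φ ψ hne => by
    obtain ⟨k, x, hkx⟩ := exists_coordFun_ne hne
    exact ⟨_, ⟨coordFun k x, hcoord k x, rfl⟩, hkx⟩
  rintro _ ⟨f, rfl⟩
  have hf : f ∈ A.topologicalClosure := by
    rw [ContinuousMap.starSubalgebra_topologicalClosure_eq_top_of_separatesPoints A hsep]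
    trivial
  exact hA.closure_subset hf

lemma Wset_subset_range_omegaSeq : Wset ⊆ Set.range (omegaSeq TH z0) := by
  have hPall : Pall ⊆ Set.range (omegaSeq TH z0) := by
    rintro F ⟨_, ⟨-, rfl⟩, p, -, hF⟩
    obtain ⟨f, hf⟩ := exists_omegaSeq_eq_exp_eval TH hTH hz0 p
    exact ⟨f, BoundedContinuousFunction.ext fun n => (hf n).trans (hF n).symm⟩
  rw [omegaSeq_eq_boundedPullback] at hPall ⊢
  refine closure_minimal ?_ (isClosed_range_boundedPullback (orbitMap TH z0))
  exact Submodule.span_le (p := LinearMap.range (boundedPullback (orbitMap TH z0)).toLinearMap)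
    |>.mpr hPall

end OmegaOfZero

/-- For the system `(𝓗, T)` and the point `0̃`: `ω_{0̃} C(𝓗) = 𝒲`, i.e. the
algebra of sequences `(f(T^n 0̃))_{n ∈ ℤ}`, `f ∈ C(𝓗)`, equals the Weyl
algebra. -/
theorem stmt14 [CompactSpace ↥Hcal] (TH : Equiv.Perm ↥Hcal)
    (hTH : ∀ φ : ↥Hcal, ((TH φ : ↥Hcal) : ℕ → 𝕋 → 𝕋) = Tmap ↑φ)
    (z0 : ↥Hcal) (hz0 : (z0 : ℕ → 𝕋 → 𝕋) = ntil 0) :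
    Set.range (omegaSeq TH z0) = Wset :=
  (range_omegaSeq_subset_Wset TH hTH hz0).antisymm (Wset_subset_range_omegaSeq TH hTH hz0)
end
end
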